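/- arXiv:1609.07481 — 2 statements merged into one kernel-verified Lean document; each statement's English description precedes it below -/
import Mathlib

section
/- The Eisenstein series E₂, E₄, E₆ are complex-differentiable on the open unit disk and for every q ∈ ℂ with |q| < 1 they satisfy Ramanujan's differential equations: q·E₂′(q) = (E₂(q)² − E₄(q))/12, q·E₄′(q) = (E₂(q)E₄(q) − E₆(q))/3, and q·E₆′(q) = (E₂(q)E₆(q) − E₄(q)²)/2. -/
open Complex

/-- The cubic theta function `a(q) = ∑_{m,n ∈ ℤ} q^(m²+mn+n²)`. -/
noncomputable def cubicA (q : ℂ) : ℂ :=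
  ∑' p : ℤ × ℤ, q ^ (p.1 ^ 2 + p.1 * p.2 + p.2 ^ 2).toNat

/-- Eisenstein series `E₂(q) = 1 - 24 ∑ σ₁(n) qⁿ`. -/
noncomputable def E2c (q : ℂ) : ℂ :=
  1 - 24 * ∑' n : ℕ, ((ArithmeticFunction.sigma 1 (n + 1) : ℕ) : ℂ) * q ^ (n + 1)

/-- Eisenstein series `E₄(q) = 1 + 240 ∑ σ₃(n) qⁿ`. -/
noncomputable def E4c (q : ℂ) : ℂ :=
  1 + 240 * ∑' n : ℕ, ((ArithmeticFunction.sigma 3 (n + 1) : ℕ) : ℂ) * q ^ (n + 1)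

/-- Eisenstein series `E₆(q) = 1 - 504 ∑ σ₅(n) qⁿ`. -/
noncomputable def E6c (q : ℂ) : ℂ :=
  1 - 504 * ∑' n : ℕ, ((ArithmeticFunction.sigma 5 (n + 1) : ℕ) : ℂ) * q ^ (n + 1)

/-- `b³(q) = ∏ (1-qⁿ)⁹ / ∏ (1-q^{3n})³`. -/
noncomputable def bCubed (q : ℂ) : ℂ :=
  (∏' n : ℕ, (1 - q ^ (n + 1)) ^ 9) / ∏' n : ℕ, (1 - q ^ (3 * (n + 1))) ^ 3

/-- `c³(q) = 27 q ∏ (1-q^{3n})⁹ / ∏ (1-qⁿ)³`. -/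
noncomputable def cCubed (q : ℂ) : ℂ :=
  27 * q * (∏' n : ℕ, (1 - q ^ (3 * (n + 1))) ^ 9) / ∏' n : ℕ, (1 - q ^ (n + 1)) ^ 3

/-- The Legendre symbol mod 3: `(n/3)`. -/
noncomputable def chi3 (n : ℕ) : ℂ :=
  if n % 3 = 1 then 1 else if n % 3 = 2 then -1 else 0

/-- Theta constant with characteristics `θ[ε,ε'](τ)`. -/
noncomputable def thetaC (e e' : ℝ) (τ : ℂ) : ℂ :=
  ∑' n : ℤ, Complex.exp (2 * Real.pi * I *
    ((1 / 2) * ((n : ℂ) + (e : ℂ) / 2) ^ 2 * τ + ((n : ℂ) + (e : ℂ) / 2) * ((e' : ℂ) / 2)))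

/-- Derivative theta constant `θ′[ε,ε'](τ)`. -/
noncomputable def thetaC' (e e' : ℝ) (τ : ℂ) : ℂ :=
  ∑' n : ℤ, 2 * Real.pi * I * ((n : ℂ) + (e : ℂ) / 2) * Complex.exp (2 * Real.pi * I *
    ((1 / 2) * ((n : ℂ) + (e : ℂ) / 2) ^ 2 * τ + ((n : ℂ) + (e : ℂ) / 2) * ((e' : ℂ) / 2)))

/-- The Dedekind eta function. -/
noncomputable def etaF (τ : ℂ) : ℂ :=
  Complex.exp (Real.pi * I * τ / 12) *
    ∏' n : ℕ, (1 - Complex.exp (2 * Real.pi * I * ((n : ℂ) + 1) * τ))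

/-!
Write `E₂ = 1 - 24 S₁`, `E₄ = 1 + 240 S₃`, `E₆ = 1 - 504 S₅` with `Sₖ(q) = ∑ σₖ(n) qⁿ`. These
series converge absolutely on the unit disc, so they may be differentiated termwise (`q d/dq`
multiplies the `n`-th coefficient by `n`) and multiplied by the Cauchy product. Each differential
equation thereby becomes a convolution identity for divisor sums, such as
`12 ∑_{i+j=n} σ₁(i) σ₁(j) = 5 σ₃(n) + σ₁(n) - 6 n σ₁(n)`.

The four convolutions needed (`σ₁σ₁`, `σ₁σ₃`, `σ₁σ₅`, `σ₃σ₃`) are evaluated by Liouville's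
elementary method. Sum `t(d, e)` over the solutions of `a d + b e = n` in positive integers, where
`g`, `t` are symmetric and `g(d, e - d) = g(d, e) - t(d, e)`. The involution
`(a, d, b, e) ↦ (b, e, a, d)` and the bijection `(a, d, b, e) ↦ (a - b, d, b, e + d)` from
`{b < a}` onto `{d < e}` leave only the diagonals `a = b` and `d = e`. These are divisor sums of
polynomials in `n / a` and in `d`, evaluated with the power sums `∑_{d<m} dᵏ`.
-/

open Finset ArithmeticFunction
open scoped ArithmeticFunction.sigma

theorem Finset.sum_eq_sum_filter_lt_add_sum_filter_gt_add_sum_filter_eq {ι α M : Type*}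
    [LinearOrder α] [AddCommMonoid M] (s : Finset ι) (u v : ι → α) (f : ι → M) :
    ∑ x ∈ s, f x = ∑ x ∈ s with u x < v x, f x + ∑ x ∈ s with v x < u x, f x +
      ∑ x ∈ s with u x = v x, f x := by
  simp only [sum_filter, ← sum_add_distrib]
  refine sum_congr rfl fun x _ => ?_
  rcases lt_trichotomy (u x) (v x) with h | h | h
  · simp [h, h.not_gt, h.ne]
  · simp [h]
  · simp [h, h.not_gt, h.ne']

/-! ### Liouville's identity -/

def twoProductReps (n : ℕ) : Finset ((ℕ × ℕ) × (ℕ × ℕ)) :=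
  (antidiagonal n).biUnion fun p => p.1.divisorsAntidiagonal ×ˢ p.2.divisorsAntidiagonal

section twoProductReps

variable {n : ℕ} {M : Type*} [AddCommMonoid M]

theorem mem_twoProductReps {x : (ℕ × ℕ) × (ℕ × ℕ)} : x ∈ twoProductReps n ↔
    0 < x.1.1 ∧ 0 < x.1.2 ∧ 0 < x.2.1 ∧ 0 < x.2.2 ∧ x.1.1 * x.1.2 + x.2.1 * x.2.2 = n := by
  obtain ⟨⟨a, d⟩, b, e⟩ := x
  simp only [twoProductReps, mem_biUnion, HasAntidiagonal.mem_antidiagonal, mem_product,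
    Nat.mem_divisorsAntidiagonal, Nat.pos_iff_ne_zero]
  constructor
  · rintro ⟨⟨_, _⟩, rfl, ⟨rfl, had⟩, rfl, hbe⟩
    simp_all
  · rintro ⟨ha, hd, hb, he, rfl⟩
    exact ⟨(a * d, b * e), rfl, ⟨rfl, by positivity⟩, rfl, by positivity⟩

theorem sum_filter_twoProductReps_swap (p : (ℕ × ℕ) × (ℕ × ℕ) → Prop) [DecidablePred p]
    (f : (ℕ × ℕ) × (ℕ × ℕ) → M) :
    ∑ x ∈ twoProductReps n with p x, f x = ∑ x ∈ twoProductReps n with p x.swap, f x.swap := by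
  rw [sum_filter, sum_filter]
  refine sum_equiv (.prodComm _ _) (fun x => ?_) (fun _ _ => rfl)
  simp only [Equiv.prodComm_apply, mem_twoProductReps, Prod.fst_swap, Prod.snd_swap]
  omega

theorem sum_filter_twoProductReps_map_swap (p : (ℕ × ℕ) × (ℕ × ℕ) → Prop) [DecidablePred p]
    (f : (ℕ × ℕ) × (ℕ × ℕ) → M) :
    ∑ x ∈ twoProductReps n with p x, f x =
      ∑ x ∈ twoProductReps n with p (x.1.swap, x.2.swap), f (x.1.swap, x.2.swap) := by
  rw [sum_filter, sum_filter]
  refine sum_equiv (.prodCongr (.prodComm _ _) (.prodComm _ _)) (fun x => ?_) (fun _ _ => rfl)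
  simp only [Equiv.prodCongr_apply, Equiv.prodComm_apply, Prod.map, mem_twoProductReps,
    Prod.fst_swap, Prod.snd_swap, mul_comm x.1.2, mul_comm x.2.2]
  omega

theorem sum_filter_twoProductReps_fst_eq (f : (ℕ × ℕ) × (ℕ × ℕ) → M) :
    ∑ x ∈ twoProductReps n with x.1.1 = x.2.1, f x =
      ∑ a ∈ n.divisors, ∑ d ∈ Ico 1 (n / a), f ((a, d), (a, n / a - d)) := by
  rw [← sum_sigma n.divisors (fun a => Ico 1 (n / a))
    fun y => f ((y.1, y.2), (y.1, n / y.1 - y.2))]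
  have hmem {a d b e : ℕ} (h : ((a, d), (b, e)) ∈ {x ∈ twoProductReps n | x.1.1 = x.2.1}) :
      b = a ∧ n / a = d + e ∧ a ∣ n ∧ n ≠ 0 ∧ 0 < d ∧ 0 < e := by
    simp only [mem_filter, mem_twoProductReps] at h
    obtain ⟨⟨ha, hd, -, he, rfl⟩, rfl⟩ := h
    rw [← mul_add, Nat.mul_div_cancel_left _ ha]
    exact ⟨rfl, rfl, dvd_mul_right _ _, by positivity, hd, he⟩
  refine sum_nbij' (fun x => ⟨x.1.1, x.1.2⟩) (fun y => ((y.1, y.2), (y.1, n / y.1 - y.2)))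
    ?_ ?_ ?_ ?_ ?_
  · rintro ⟨⟨a, d⟩, b, e⟩ hx
    obtain ⟨-, hnd, hdvd, hn, hd, he⟩ := hmem hx
    simp only [mem_sigma, Nat.mem_divisors, mem_Ico]
    omega
  · rintro ⟨a, d⟩ hy
    simp only [mem_sigma, Nat.mem_divisors, mem_Ico] at hy
    obtain ⟨⟨⟨k, rfl⟩, hn⟩, hd, hdk⟩ := hy
    have ha : 0 < a := Nat.pos_of_ne_zero (left_ne_zero_of_mul hn)
    rw [Nat.mul_div_cancel_left _ ha] at hdk ⊢
    simp only [mem_filter, mem_twoProductReps, ← mul_add, Nat.add_sub_cancel' hdk.le, and_true]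
    exact ⟨ha, hd, ha, by omega⟩
  · rintro ⟨⟨a, d⟩, b, e⟩ hx
    obtain ⟨rfl, hnd, -⟩ := hmem hx
    simp [hnd]
  · rintro ⟨a, d⟩ -
    rfl
  · rintro ⟨⟨a, d⟩, b, e⟩ hx
    obtain ⟨rfl, hnd, -⟩ := hmem hx
    simp [hnd]

theorem sum_filter_twoProductReps_snd_lt_fst (f : (ℕ × ℕ) × (ℕ × ℕ) → M) :
    ∑ x ∈ twoProductReps n with x.2.1 < x.1.1, f x =
      ∑ x ∈ twoProductReps n with x.1.2 < x.2.2,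
        f ((x.1.1 + x.2.1, x.1.2), (x.2.1, x.2.2 - x.1.2)) := by
  refine sum_nbij' (fun x => ((x.1.1 - x.2.1, x.1.2), (x.2.1, x.2.2 + x.1.2)))
    (fun x => ((x.1.1 + x.2.1, x.1.2), (x.2.1, x.2.2 - x.1.2))) ?_ ?_ ?_ ?_ ?_ <;>
    rintro ⟨⟨a, d⟩, b, e⟩ hx <;>
    simp only [mem_filter, mem_twoProductReps] at hx ⊢ <;>
    obtain ⟨⟨ha, hd, hb, he, rfl⟩, hlt⟩ := hx
  · refine ⟨⟨by omega, hd, hb, by omega, ?_⟩, by omega⟩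
    zify [hlt.le]
    ring
  · refine ⟨⟨by omega, hd, hb, by omega, ?_⟩, by omega⟩
    zify [hlt.le]
    ring
  all_goals rw [Nat.sub_add_cancel hlt.le, Nat.add_sub_cancel]

theorem sum_filter_twoProductReps_snd_eq (F : ℕ → ℕ → M) :
    ∑ x ∈ twoProductReps n with x.1.2 = x.2.2, F x.1.2 x.2.2 =
      ∑ d ∈ n.divisors, (n / d - 1) • F d d := by
  rw [sum_filter_twoProductReps_map_swap]
  simp only [Prod.snd_swap]
  rw [sum_filter_twoProductReps_fst_eq]
  simp [Nat.card_Ico]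

theorem sum_twoProductReps_mul {R : Type*} [CommSemiring R] (f h : ℕ → R) :
    ∑ x ∈ twoProductReps n, f x.1.2 * h x.2.2 =
      ∑ p ∈ antidiagonal n, (∑ d ∈ p.1.divisors, f d) * ∑ e ∈ p.2.divisors, h e := by
  rw [twoProductReps, sum_biUnion]
  · refine sum_congr rfl fun p _ => ?_
    rw [sum_product, sum_mul_sum,
      ← Nat.sum_divisorsAntidiagonal' fun _ d => ∑ e ∈ p.2.divisors, f d * h e]
    exact sum_congr rfl fun x _ => Nat.sum_divisorsAntidiagonal' fun _ e => f x.2 * h e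
  · intro p hp q hq hpq
    simp only [Function.onFun]
    refine disjoint_left.2 fun x hxp hxq => hpq ?_
    simp only [mem_product, Nat.mem_divisorsAntidiagonal] at hxp hxq
    rw [mem_coe, HasAntidiagonal.mem_antidiagonal] at hp hq
    ext <;> omega

end twoProductReps

theorem sum_twoProductReps_eq_of_sub_eq {R : Type*} [AddCommGroup R] {g t : ℕ → ℕ → R}
    (hg : ∀ d e, g d e = g e d) (ht : ∀ d e, t d e = t e d)
    (hgt : ∀ d e, d < e → g d (e - d) = g d e - t d e) (n : ℕ) :
    ∑ x ∈ twoProductReps n, t x.1.2 x.2.2 =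
      ∑ a ∈ n.divisors, ∑ d ∈ Ico 1 (n / a), g d (n / a - d) -
        ∑ d ∈ n.divisors, (n / d - 1) • (g d d - t d d) := by
  set Q := twoProductReps n
  have split_ab := sum_eq_sum_filter_lt_add_sum_filter_gt_add_sum_filter_eq Q
    (·.1.1) (·.2.1) fun x => g x.1.2 x.2.2
  have split_de_g := sum_eq_sum_filter_lt_add_sum_filter_gt_add_sum_filter_eq Q
    (·.1.2) (·.2.2) fun x => g x.1.2 x.2.2
  have split_de_t := sum_eq_sum_filter_lt_add_sum_filter_gt_add_sum_filter_eq Q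
    (·.1.2) (·.2.2) fun x => t x.1.2 x.2.2
  have swap_ab : ∑ x ∈ Q with x.1.1 < x.2.1, g x.1.2 x.2.2 =
      ∑ x ∈ Q with x.2.1 < x.1.1, g x.1.2 x.2.2 := by
    simp [Q, sum_filter_twoProductReps_swap (n := n) (fun x => x.1.1 < x.2.1), hg]
  have swap_de_g : ∑ x ∈ Q with x.2.2 < x.1.2, g x.1.2 x.2.2 =
      ∑ x ∈ Q with x.1.2 < x.2.2, g x.1.2 x.2.2 := by
    simp [Q, sum_filter_twoProductReps_swap (n := n) (fun x => x.2.2 < x.1.2), hg]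
  have swap_de_t : ∑ x ∈ Q with x.2.2 < x.1.2, t x.1.2 x.2.2 =
      ∑ x ∈ Q with x.1.2 < x.2.2, t x.1.2 x.2.2 := by
    simp [Q, sum_filter_twoProductReps_swap (n := n) (fun x => x.2.2 < x.1.2), ht]
  have shift : ∑ x ∈ Q with x.2.1 < x.1.1, g x.1.2 x.2.2 =
      ∑ x ∈ Q with x.1.2 < x.2.2, g x.1.2 x.2.2 - ∑ x ∈ Q with x.1.2 < x.2.2, t x.1.2 x.2.2 := by
    rw [sum_filter_twoProductReps_snd_lt_fst, ← sum_sub_distrib]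
    exact sum_congr rfl fun x hx => hgt _ _ (mem_filter.1 hx).2
  have diag_ab : ∑ x ∈ Q with x.1.1 = x.2.1, g x.1.2 x.2.2 =
      ∑ a ∈ n.divisors, ∑ d ∈ Ico 1 (n / a), g d (n / a - d) :=
    sum_filter_twoProductReps_fst_eq _
  have diag_g : ∑ x ∈ Q with x.1.2 = x.2.2, g x.1.2 x.2.2 = ∑ d ∈ n.divisors, (n / d - 1) • g d d :=
    sum_filter_twoProductReps_snd_eq g
  have diag_t : ∑ x ∈ Q with x.1.2 = x.2.2, t x.1.2 x.2.2 = ∑ d ∈ n.divisors, (n / d - 1) • t d d :=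
    sum_filter_twoProductReps_snd_eq t
  -- The two trichotomies of `∑ g` give `2 ∑_{d<e} t = ∑_{a=b} g - ∑_{d=e} g`.
  simp only [smul_sub, sum_sub_distrib]
  linear_combination (norm := module) split_de_t + swap_de_t + diag_t + split_ab - split_de_g +
    swap_ab + (2 : ℤ) • shift + diag_ab - swap_de_g - diag_g

/-! ### Convolutions of divisor sums -/

theorem cast_sigma_apply {R : Type*} [CommSemiring R] (k n : ℕ) :
    (σ k n : R) = ∑ d ∈ n.divisors, (d : R) ^ k := by
  simp [sigma_apply]

theorem cast_sigma_one_apply {R : Type*} [CommSemiring R] (n : ℕ) :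
    (σ 1 n : R) = ∑ d ∈ n.divisors, (d : R) := by
  simp [sigma_one_apply]

theorem sum_twoProductReps_pow_mul_pow (i j n : ℕ) :
    ∑ x ∈ twoProductReps n, (x.1.2 : ℤ) ^ i * (x.2.2 : ℤ) ^ j =
      ∑ p ∈ antidiagonal n, (σ i p.1 : ℤ) * σ j p.2 := by
  simp only [cast_sigma_apply]
  exact sum_twoProductReps_mul (fun d => (d : ℤ) ^ i) fun e => (e : ℤ) ^ j

theorem sum_divisors_nsmul_pow (n w : ℕ) :
    ∑ d ∈ n.divisors, (n / d - 1) • (d : ℤ) ^ (w + 1) = n * σ w n - σ (w + 1) n := by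
  rw [cast_sigma_apply, cast_sigma_apply, mul_sum, ← sum_sub_distrib]
  refine sum_congr rfl fun d hd => ?_
  obtain ⟨k, hk⟩ := Nat.dvd_of_mem_divisors hd
  have hd0 : 0 < d := Nat.pos_of_mem_divisors hd
  have hk0 : k ≠ 0 := right_ne_zero_of_mul (hk ▸ Nat.ne_zero_of_mem_divisors hd)
  subst hk
  rw [Nat.mul_div_cancel_left _ hd0, nsmul_eq_mul]
  push_cast [Nat.one_le_iff_ne_zero.2 hk0]
  ring

theorem sum_antidiagonal_sigma_mul_sigma_of_sub_eq {g : ℕ → ℕ → ℤ} {P : ℕ → ℤ} {N b c : ℤ}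
    {i j w : ℕ} (hij : i + j = w + 1) (hg : ∀ d e, g d e = g e d)
    (hgt : ∀ d e, d < e →
      g d (e - d) = g d e - c * ((d : ℤ) ^ i * (e : ℤ) ^ j + (d : ℤ) ^ j * (e : ℤ) ^ i))
    (hgd : ∀ d, g d d = b * (d : ℤ) ^ (w + 1))
    (hP : ∀ m, N * ∑ d ∈ Ico 1 m, g d (m - d) = P m) (n : ℕ) :
    2 * c * N * ∑ p ∈ antidiagonal n, (σ i p.1 : ℤ) * σ j p.2 =
      ∑ d ∈ n.divisors, P d - (b - 2 * c) * N * (n * σ w n - σ (w + 1) n) := by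
  have key := sum_twoProductReps_eq_of_sub_eq hg
    (t := fun d e => c * ((d : ℤ) ^ i * (e : ℤ) ^ j + (d : ℤ) ^ j * (e : ℤ) ^ i))
    (fun _ _ => by ring) hgt n
  have hswap : ∑ p ∈ antidiagonal n, (σ j p.1 : ℤ) * σ i p.2 =
      ∑ p ∈ antidiagonal n, (σ i p.1 : ℤ) * σ j p.2 := by
    rw [← Nat.sum_antidiagonal_swap]
    exact sum_congr rfl fun _ _ => mul_comm _ _
  have hdiag : ∀ d : ℕ, (n / d - 1) • (g d d - c * ((d : ℤ) ^ i * d ^ j + (d : ℤ) ^ j * d ^ i)) =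
      (b - 2 * c) * ((n / d - 1) • (d : ℤ) ^ (w + 1)) := fun d => by
    rw [hgd, ← pow_add, ← pow_add, add_comm j, hij, mul_smul_comm]
    congr 1
    ring
  have hdivisors : N * ∑ a ∈ n.divisors, ∑ d ∈ Ico 1 (n / a), g d (n / a - d) =
      ∑ d ∈ n.divisors, P d := by
    rw [mul_sum, ← Nat.sum_div_divisors n P]
    exact sum_congr rfl fun a _ => hP _
  rw [← mul_sum, sum_add_distrib, sum_twoProductReps_pow_mul_pow, sum_twoProductReps_pow_mul_pow,
    hswap, sum_congr rfl fun d _ => hdiag d, ← mul_sum, sum_divisors_nsmul_pow] at key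
  linear_combination N * key + hdivisors

theorem two_mul_sum_range_id (m : ℕ) : 2 * ∑ d ∈ range m, (d : ℤ) = m ^ 2 - m := by
  induction m with
  | zero => simp
  | succ m ih => rw [sum_range_succ]; push_cast; linear_combination ih

theorem six_mul_sum_range_pow_two (m : ℕ) :
    6 * ∑ d ∈ range m, (d : ℤ) ^ 2 = 2 * m ^ 3 - 3 * m ^ 2 + m := by
  induction m with
  | zero => simp
  | succ m ih => rw [sum_range_succ]; push_cast; linear_combination ih

theorem four_mul_sum_range_pow_three (m : ℕ) :
    4 * ∑ d ∈ range m, (d : ℤ) ^ 3 = m ^ 4 - 2 * m ^ 3 + m ^ 2 := by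
  induction m with
  | zero => simp
  | succ m ih => rw [sum_range_succ]; push_cast; linear_combination ih

theorem thirty_mul_sum_range_pow_four (m : ℕ) :
    30 * ∑ d ∈ range m, (d : ℤ) ^ 4 = 6 * m ^ 5 - 15 * m ^ 4 + 10 * m ^ 3 - m := by
  induction m with
  | zero => simp
  | succ m ih => rw [sum_range_succ]; push_cast; linear_combination ih

theorem twelve_mul_sum_range_pow_five (m : ℕ) :
    12 * ∑ d ∈ range m, (d : ℤ) ^ 5 = 2 * m ^ 6 - 6 * m ^ 5 + 5 * m ^ 4 - m ^ 2 := by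
  induction m with
  | zero => simp
  | succ m ih => rw [sum_range_succ]; push_cast; linear_combination ih

theorem fortyTwo_mul_sum_range_pow_six (m : ℕ) :
    42 * ∑ d ∈ range m, (d : ℤ) ^ 6 = 6 * m ^ 7 - 21 * m ^ 6 + 21 * m ^ 5 - 7 * m ^ 3 + m := by
  induction m with
  | zero => simp
  | succ m ih => rw [sum_range_succ]; push_cast; linear_combination ih


theorem six_mul_sum_Ico_sq_add_mul_add_sq (m : ℕ) :
    6 * ∑ d ∈ Ico 1 m, ((d : ℤ) ^ 2 + d * ((m - d : ℕ) : ℤ) + ((m - d : ℕ) : ℤ) ^ 2) =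
      5 * (m : ℤ) ^ 3 - 6 * m ^ 2 + m := by
  rcases Nat.eq_zero_or_pos m with rfl | hm
  · simp
  rw [sum_Ico_eq_sub _ hm, sum_range_one]
  have expand : ∀ d ∈ range m, (d : ℤ) ^ 2 + d * ((m - d : ℕ) : ℤ) + ((m - d : ℕ) : ℤ) ^ 2 =
      m ^ 2 - m * d + d ^ 2 := fun d hd => by
    push_cast [(mem_range.1 hd).le]; ring
  simp only [sum_congr rfl expand, sum_add_distrib, sum_sub_distrib, ← mul_sum, sum_const,
    card_range, nsmul_eq_mul]
  push_cast
  linear_combination (-3 * (m : ℤ)) * two_mul_sum_range_id m + six_mul_sum_range_pow_two m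

theorem sixty_mul_sum_Ico_quartic (m : ℕ) :
    60 * ∑ d ∈ Ico 1 m, ((d : ℤ) ^ 4 + 2 * d ^ 3 * ((m - d : ℕ) : ℤ) +
      3 * d ^ 2 * ((m - d : ℕ) : ℤ) ^ 2 + 2 * d * ((m - d : ℕ) : ℤ) ^ 3 + ((m - d : ℕ) : ℤ) ^ 4) =
      42 * (m : ℤ) ^ 5 - 60 * m ^ 4 + 20 * m ^ 3 - 2 * m := by
  rcases Nat.eq_zero_or_pos m with rfl | hm
  · simp
  rw [sum_Ico_eq_sub _ hm, sum_range_one]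
  have expand : ∀ d ∈ range m, (d : ℤ) ^ 4 + 2 * d ^ 3 * ((m - d : ℕ) : ℤ) +
      3 * d ^ 2 * ((m - d : ℕ) : ℤ) ^ 2 + 2 * d * ((m - d : ℕ) : ℤ) ^ 3 + ((m - d : ℕ) : ℤ) ^ 4 =
      m ^ 4 - 2 * m ^ 3 * d + 3 * m ^ 2 * d ^ 2 - 2 * m * d ^ 3 + d ^ 4 := fun d hd => by
    push_cast [(mem_range.1 hd).le]; ring
  simp only [sum_congr rfl expand, sum_add_distrib, sum_sub_distrib, ← mul_sum, sum_const,
    card_range, nsmul_eq_mul]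
  push_cast
  linear_combination (-60 * (m : ℤ) ^ 3) * two_mul_sum_range_id m +
    (30 * (m : ℤ) ^ 2) * six_mul_sum_range_pow_two m +
    (-30 * (m : ℤ)) * four_mul_sum_range_pow_three m + 2 * thirty_mul_sum_range_pow_four m

theorem fourHundredTwenty_mul_sum_Ico_sextic (m : ℕ) :
    420 * ∑ d ∈ Ico 1 m, (2 * (d : ℤ) ^ 6 + 6 * d ^ 5 * ((m - d : ℕ) : ℤ) +
      5 * d ^ 4 * ((m - d : ℕ) : ℤ) ^ 2 + 5 * d ^ 2 * ((m - d : ℕ) : ℤ) ^ 4 +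
      6 * d * ((m - d : ℕ) : ℤ) ^ 5 + 2 * ((m - d : ℕ) : ℤ) ^ 6) =
      400 * (m : ℤ) ^ 7 - 840 * m ^ 6 + 420 * m ^ 5 + 20 * m := by
  rcases Nat.eq_zero_or_pos m with rfl | hm
  · simp
  rw [sum_Ico_eq_sub _ hm, sum_range_one]
  have expand : ∀ d ∈ range m, 2 * (d : ℤ) ^ 6 + 6 * d ^ 5 * ((m - d : ℕ) : ℤ) +
      5 * d ^ 4 * ((m - d : ℕ) : ℤ) ^ 2 + 5 * d ^ 2 * ((m - d : ℕ) : ℤ) ^ 4 +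
      6 * d * ((m - d : ℕ) : ℤ) ^ 5 + 2 * ((m - d : ℕ) : ℤ) ^ 6 =
      2 * m ^ 6 - 6 * m ^ 5 * d + 5 * m ^ 4 * d ^ 2 + 5 * m ^ 2 * d ^ 4 - 6 * m * d ^ 5 +
        2 * d ^ 6 := fun d hd => by
    push_cast [(mem_range.1 hd).le]; ring
  simp only [sum_congr rfl expand, sum_add_distrib, sum_sub_distrib, ← mul_sum, sum_const,
    card_range, nsmul_eq_mul]
  push_cast
  linear_combination (-1260 * (m : ℤ) ^ 5) * two_mul_sum_range_id m +
    (350 * (m : ℤ) ^ 4) * six_mul_sum_range_pow_two m +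
    (70 * (m : ℤ) ^ 2) * thirty_mul_sum_range_pow_four m +
    (-210 * (m : ℤ)) * twelve_mul_sum_range_pow_five m + 20 * fortyTwo_mul_sum_range_pow_six m

theorem sixty_mul_sum_Ico_sq_mul_sq_mul_sq (m : ℕ) :
    60 * ∑ d ∈ Ico 1 m, ((d : ℤ) ^ 2 * ((m - d : ℕ) : ℤ) ^ 2 * (d + ((m - d : ℕ) : ℤ)) ^ 2) =
      2 * (m : ℤ) ^ 7 - 2 * m ^ 3 := by
  rcases Nat.eq_zero_or_pos m with rfl | hm
  · simp
  rw [sum_Ico_eq_sub _ hm, sum_range_one]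
  have expand : ∀ d ∈ range m, (d : ℤ) ^ 2 * ((m - d : ℕ) : ℤ) ^ 2 * (d + ((m - d : ℕ) : ℤ)) ^ 2 =
      m ^ 4 * d ^ 2 - 2 * m ^ 3 * d ^ 3 + m ^ 2 * d ^ 4 := fun d hd => by
    push_cast [(mem_range.1 hd).le]; ring
  simp only [sum_congr rfl expand, sum_add_distrib, sum_sub_distrib, ← mul_sum]
  push_cast
  linear_combination (10 * (m : ℤ) ^ 4) * six_mul_sum_range_pow_two m +
    (-30 * (m : ℤ) ^ 3) * four_mul_sum_range_pow_three m +
    (2 * (m : ℤ) ^ 2) * thirty_mul_sum_range_pow_four m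

theorem sum_antidiagonal_sigma_one_mul_sigma_one (n : ℕ) :
    12 * ∑ p ∈ antidiagonal n, (σ 1 p.1 : ℤ) * σ 1 p.2 = 5 * σ 3 n + σ 1 n - 6 * n * σ 1 n := by
  have key := sum_antidiagonal_sigma_mul_sigma_of_sub_eq (i := 1) (j := 1) (w := 1) (c := 1)
    (b := 3) (g := fun d e => (d : ℤ) ^ 2 + d * e + e ^ 2) rfl (fun _ _ => by ring)
    (fun d e h => by push_cast [h.le]; ring) (fun _ => by ring) six_mul_sum_Ico_sq_add_mul_add_sq n
  simp only [sum_add_distrib, sum_sub_distrib, ← mul_sum, ← cast_sigma_apply,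
    ← cast_sigma_one_apply, Nat.reduceAdd] at key
  linear_combination key

theorem sum_antidiagonal_sigma_one_mul_sigma_three (n : ℕ) :
    240 * ∑ p ∈ antidiagonal n, (σ 1 p.1 : ℤ) * σ 3 p.2 =
      21 * σ 5 n + 10 * σ 3 n - σ 1 n - 30 * n * σ 3 n := by
  have key := sum_antidiagonal_sigma_mul_sigma_of_sub_eq (i := 1) (j := 3) (w := 3) (c := 4)
    (b := 9) (g := fun d e => (d : ℤ) ^ 4 + 2 * d ^ 3 * e + 3 * d ^ 2 * e ^ 2 + 2 * d * e ^ 3 +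
      e ^ 4) rfl
    (fun _ _ => by ring) (fun d e h => by push_cast [h.le]; ring) (fun _ => by ring)
    sixty_mul_sum_Ico_quartic n
  simp only [sum_add_distrib, sum_sub_distrib, ← mul_sum, ← cast_sigma_apply,
    ← cast_sigma_one_apply, Nat.reduceAdd] at key
  linarith

theorem sum_antidiagonal_sigma_one_mul_sigma_five (n : ℕ) :
    504 * ∑ p ∈ antidiagonal n, (σ 1 p.1 : ℤ) * σ 5 p.2 =
      20 * σ 7 n + 21 * σ 5 n + σ 1 n - 42 * n * σ 5 n := by
  have key := sum_antidiagonal_sigma_mul_sigma_of_sub_eq (i := 1) (j := 5) (w := 5) (c := 12)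
    (b := 26) (g := fun d e => 2 * (d : ℤ) ^ 6 + 6 * d ^ 5 * e + 5 * d ^ 4 * e ^ 2 +
      5 * d ^ 2 * e ^ 4 + 6 * d * e ^ 5 + 2 * e ^ 6) rfl
    (fun _ _ => by ring) (fun d e h => by push_cast [h.le]; ring) (fun _ => by ring)
    fourHundredTwenty_mul_sum_Ico_sextic n
  simp only [sum_add_distrib, sum_sub_distrib, ← mul_sum, ← cast_sigma_apply,
    ← cast_sigma_one_apply, Nat.reduceAdd] at key
  linarith

theorem sum_antidiagonal_sigma_three_mul_sigma_three (n : ℕ) :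
    120 * ∑ p ∈ antidiagonal n, (σ 3 p.1 : ℤ) * σ 3 p.2 = σ 7 n - σ 3 n := by
  have key := sum_antidiagonal_sigma_mul_sigma_of_sub_eq (i := 3) (j := 3) (w := 5) (c := 2)
    (b := 4) (g := fun d e => (d : ℤ) ^ 2 * e ^ 2 * (d + e) ^ 2) rfl
    (fun _ _ => by ring) (fun d e h => by push_cast [h.le]; ring) (fun _ => by ring)
    sixty_mul_sum_Ico_sq_mul_sq_mul_sq n
  simp only [sum_sub_distrib, ← mul_sum, ← cast_sigma_apply, Nat.reduceAdd] at key
  linarith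

/-! ### Power series on the unit disc -/

noncomputable def qSeries (c : ℕ → ℂ) (q : ℂ) : ℂ := ∑' n, c n * q ^ n

section qSeries

variable {c d : ℕ → ℂ} {q : ℂ}

theorem qSeries_eq_tsum_succ (h0 : c 0 = 0) (q : ℂ) :
    qSeries c q = ∑' n, c (n + 1) * q ^ (n + 1) := by
  refine (Nat.succ_injective.tsum_eq fun n hn => ?_).symm
  cases n with
  | zero => simp [h0] at hn
  | succ n => exact ⟨n, rfl⟩

theorem hasSum_qSeries_mul (hc : Summable fun n => ‖c n * q ^ n‖)
    (hd : Summable fun n => ‖d n * q ^ n‖) :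
    HasSum (fun n => (∑ p ∈ antidiagonal n, c p.1 * d p.2) * q ^ n)
      (qSeries c q * qSeries d q) := by
  have hterm : ∀ n, (∑ p ∈ antidiagonal n, c p.1 * d p.2) * q ^ n =
      ∑ p ∈ antidiagonal n, c p.1 * q ^ p.1 * (d p.2 * q ^ p.2) := fun n => by
    rw [sum_mul]
    refine sum_congr rfl fun p hp => ?_
    rw [← HasAntidiagonal.mem_antidiagonal.1 hp, pow_add]
    ring
  simp only [hterm, qSeries]
  rw [tsum_mul_tsum_eq_tsum_sum_antidiagonal_of_summable_norm hc hd]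
  exact (summable_norm_sum_mul_antidiagonal_of_summable_norm hc hd).of_norm.hasSum

variable (hc : ∀ z : ℂ, ‖z‖ < 1 → Summable fun n => ‖c n * z ^ n‖)
include hc

theorem exists_ball_summable_bound (hq : ‖q‖ < 1) : ∃ r : ℝ, ‖q‖ < r ∧
    Summable (fun n => ‖c n * (r : ℂ) ^ n‖) ∧
    ∀ n, ∀ w ∈ Metric.ball (0 : ℂ) r, ‖c n * w ^ n‖ ≤ ‖c n * (r : ℂ) ^ n‖ := by
  obtain ⟨r, hqr, hr1⟩ := exists_between hq
  have hr0 : 0 ≤ r := (norm_nonneg q).trans hqr.le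
  refine ⟨r, hqr, hc r (by rwa [Complex.norm_real, Real.norm_of_nonneg hr0]), fun n w hw => ?_⟩
  rw [mem_ball_zero_iff] at hw
  simp only [norm_mul, norm_pow, Complex.norm_real, Real.norm_of_nonneg hr0]
  gcongr

theorem differentiableAt_qSeries (hq : ‖q‖ < 1) : DifferentiableAt ℂ (qSeries c) q := by
  obtain ⟨r, hqr, hsum, hle⟩ := exists_ball_summable_bound hc hq
  refine (differentiableOn_tsum_of_summable_norm hsum (fun n => ?_) Metric.isOpen_ball hle
    ).differentiableAt (Metric.isOpen_ball.mem_nhds (mem_ball_zero_iff.2 hqr))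
  fun_prop

theorem hasSum_mul_deriv_qSeries (hq : ‖q‖ < 1) :
    HasSum (fun n => n * c n * q ^ n) (q * deriv (qSeries c) q) := by
  obtain ⟨r, hqr, hsum, hle⟩ := exists_ball_summable_bound hc hq
  have h := (hasSum_deriv_of_summable_norm hsum (fun n => by fun_prop) Metric.isOpen_ball hle
    (mem_ball_zero_iff.2 hqr)).mul_left q
  have hterm : (fun n => q * deriv (fun w => c n * w ^ n) q) = fun n => n * c n * q ^ n := by
    funext n
    simp only [deriv_const_mul_field', deriv_pow_field]
    cases n with
    | zero => simp
    | succ n => push_cast; ring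
  rwa [hterm] at h

end qSeries

theorem summable_norm_sigma_mul_pow (k : ℕ) {q : ℂ} (hq : ‖q‖ < 1) :
    Summable fun n => ‖(σ k n : ℂ) * q ^ n‖ := by
  refine (summable_pow_mul_geometric_of_norm_lt_one (k + 1) (r := ‖q‖) (by simpa)).of_nonneg_of_le
    (fun _ => norm_nonneg _) fun n => ?_
  rw [norm_mul, norm_pow, Complex.norm_natCast]
  gcongr
  exact_mod_cast sigma_le_pow_succ k n

/-! ### Ramanujan's equations -/

section Eisenstein

theorem E2c_eq_qSeries : E2c = fun q => 1 - 24 * qSeries (fun n => (σ 1 n : ℂ)) q := by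
  funext q
  rw [E2c, qSeries_eq_tsum_succ (by simp)]

theorem E4c_eq_qSeries : E4c = fun q => 1 + 240 * qSeries (fun n => (σ 3 n : ℂ)) q := by
  funext q
  rw [E4c, qSeries_eq_tsum_succ (by simp)]

theorem E6c_eq_qSeries : E6c = fun q => 1 - 504 * qSeries (fun n => (σ 5 n : ℂ)) q := by
  funext q
  rw [E6c, qSeries_eq_tsum_succ (by simp)]

variable {q : ℂ} (hq : ‖q‖ < 1)
include hq

theorem hasSum_sigma_mul_pow (k : ℕ) :
    HasSum (fun n => (σ k n : ℂ) * q ^ n) (qSeries (fun n => (σ k n : ℂ)) q) :=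
  (summable_norm_sigma_mul_pow k hq).of_norm.hasSum

theorem hasSum_sum_antidiagonal_sigma_mul_sigma_mul_pow (i j : ℕ) :
    HasSum (fun n => (∑ p ∈ antidiagonal n, (σ i p.1 : ℂ) * σ j p.2) * q ^ n)
      (qSeries (fun n => (σ i n : ℂ)) q * qSeries (fun n => (σ j n : ℂ)) q) :=
  hasSum_qSeries_mul (c := fun n => (σ i n : ℂ)) (d := fun n => (σ j n : ℂ))
    (summable_norm_sigma_mul_pow i hq) (summable_norm_sigma_mul_pow j hq)

theorem hasSum_mul_sigma_mul_pow (k : ℕ) :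
    HasSum (fun n => n * (σ k n : ℂ) * q ^ n) (q * deriv (qSeries fun n => (σ k n : ℂ)) q) :=
  hasSum_mul_deriv_qSeries (fun _ => summable_norm_sigma_mul_pow k) hq

theorem differentiableAt_qSeries_sigma (k : ℕ) :
    DifferentiableAt ℂ (qSeries fun n => (σ k n : ℂ)) q :=
  differentiableAt_qSeries (fun _ => summable_norm_sigma_mul_pow k) hq

theorem q_mul_deriv_E2c : q * deriv E2c q = (E2c q ^ 2 - E4c q) / 12 := by
  have conv (n : ℕ) : 12 * ∑ p ∈ antidiagonal n, (σ 1 p.1 : ℂ) * σ 1 p.2 =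
      5 * σ 3 n + σ 1 n - 6 * n * σ 1 n := by
    exact_mod_cast sum_antidiagonal_sigma_one_mul_sigma_one n
  have key := ((hasSum_mul_sigma_mul_pow hq 1).mul_left (-24)).unique (by
    convert (((hasSum_sigma_mul_pow hq 1).mul_left (-4)).add
      ((hasSum_sum_antidiagonal_sigma_mul_sigma_mul_pow hq 1 1).mul_left 48)).add
      ((hasSum_sigma_mul_pow hq 3).mul_left (-20)) using 1
    funext n
    linear_combination (-4 * q ^ n) * conv n)
  rw [E2c_eq_qSeries, E4c_eq_qSeries, deriv_const_sub, deriv_const_mul_field']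
  linear_combination key

theorem q_mul_deriv_E4c : q * deriv E4c q = (E2c q * E4c q - E6c q) / 3 := by
  have conv (n : ℕ) : 240 * ∑ p ∈ antidiagonal n, (σ 1 p.1 : ℂ) * σ 3 p.2 =
      21 * σ 5 n + 10 * σ 3 n - σ 1 n - 30 * n * σ 3 n := by
    exact_mod_cast sum_antidiagonal_sigma_one_mul_sigma_three n
  have key := ((hasSum_mul_sigma_mul_pow hq 3).mul_left 240).unique (by
    convert ((((hasSum_sigma_mul_pow hq 3).mul_left 80).add
      ((hasSum_sigma_mul_pow hq 1).mul_left (-8))).add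
      ((hasSum_sum_antidiagonal_sigma_mul_sigma_mul_pow hq 1 3).mul_left (-1920))).add
      ((hasSum_sigma_mul_pow hq 5).mul_left 168) using 1
    funext n
    linear_combination (8 * q ^ n) * conv n)
  rw [E2c_eq_qSeries, E4c_eq_qSeries, E6c_eq_qSeries, deriv_const_add, deriv_const_mul_field']
  linear_combination key

theorem q_mul_deriv_E6c : q * deriv E6c q = (E2c q * E6c q - E4c q ^ 2) / 2 := by
  have conv15 (n : ℕ) : 504 * ∑ p ∈ antidiagonal n, (σ 1 p.1 : ℂ) * σ 5 p.2 =
      20 * σ 7 n + 21 * σ 5 n + σ 1 n - 42 * n * σ 5 n := by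
    exact_mod_cast sum_antidiagonal_sigma_one_mul_sigma_five n
  have conv33 (n : ℕ) : 120 * ∑ p ∈ antidiagonal n, (σ 3 p.1 : ℂ) * σ 3 p.2 = σ 7 n - σ 3 n := by
    exact_mod_cast sum_antidiagonal_sigma_three_mul_sigma_three n
  have key := ((hasSum_mul_sigma_mul_pow hq 5).mul_left (-504)).unique (by
    convert (((((hasSum_sigma_mul_pow hq 5).mul_left (-252)).add
      ((hasSum_sigma_mul_pow hq 1).mul_left (-12))).add
      ((hasSum_sum_antidiagonal_sigma_mul_sigma_mul_pow hq 1 5).mul_left 6048)).add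
      ((hasSum_sigma_mul_pow hq 3).mul_left (-240))).add
      ((hasSum_sum_antidiagonal_sigma_mul_sigma_mul_pow hq 3 3).mul_left (-28800)) using 1
    funext n
    linear_combination (-12 * q ^ n) * conv15 n + (240 * q ^ n) * conv33 n)
  rw [E2c_eq_qSeries, E4c_eq_qSeries, E6c_eq_qSeries, deriv_const_sub, deriv_const_mul_field']
  linear_combination key

theorem differentiableAt_E2c : DifferentiableAt ℂ E2c q := by
  have := differentiableAt_qSeries_sigma hq 1
  rw [E2c_eq_qSeries]
  fun_prop

theorem differentiableAt_E4c : DifferentiableAt ℂ E4c q := by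
  have := differentiableAt_qSeries_sigma hq 3
  rw [E4c_eq_qSeries]
  fun_prop

theorem differentiableAt_E6c : DifferentiableAt ℂ E6c q := by
  have := differentiableAt_qSeries_sigma hq 5
  rw [E6c_eq_qSeries]
  fun_prop

end Eisenstein

theorem stmt9 :
    ∀ q : ℂ, ‖q‖ < 1 →
      (DifferentiableAt ℂ E2c q ∧ DifferentiableAt ℂ E4c q ∧ DifferentiableAt ℂ E6c q) ∧
      q * deriv E2c q = (E2c q ^ 2 - E4c q) / 12 ∧
      q * deriv E4c q = (E2c q * E4c q - E6c q) / 3 ∧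
      q * deriv E6c q = (E2c q * E6c q - E4c q ^ 2) / 2 :=
  fun _ hq => ⟨⟨differentiableAt_E2c hq, differentiableAt_E4c hq, differentiableAt_E6c hq⟩,
    q_mul_deriv_E2c hq, q_mul_deriv_E4c hq, q_mul_deriv_E6c hq⟩
end

section
/- (Farkas–Kra cubic identity) For every τ in the upper half-plane ℍ, θ[1/3,1/3](τ)³ + θ[1/3,5/3](τ)³ = θ[1/3,1](τ)³ and e^{πi/3}·θ[1/3,1/3](τ)³ + e^{2πi/3}·θ[1/3,5/3](τ)³ = θ[1,1/3](τ)³. -/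
open Complex

open Complex Real

/-!
Cubing turns `θ[ε,ε']` into a sum over `p ∈ ℤ³` of the Gaussian `exp(πiτ‖u‖²)`,
`u = p + (ε/2)(1,1,1)`, times a 12th root of unity depending only on `N = p₁ + p₂ + p₃`.
The reflection in the plane `u₁ + u₂ + u₃ = 0` preserves `‖u‖²`, negates the coordinate sum,
and for `ε = 1/3` maps the shifted lattice to itself exactly on the class `N ≡ 1 (mod 3)`.
There the phase of `θ[1/3,1/3]³ + θ[1/3,5/3]³ - θ[1/3,1]³` changes sign, and on the other
classes it vanishes. For the second identity the same reflection cancels the class `N ≡ 1` of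
the left side, whose phase also vanishes on `N ≡ 0`; minus the reflection carries the class
`N ≡ 2` onto the class `N ≡ 1` of `ℤ³ + (1/2)(1,1,1)`, where the summands of `θ[1,1/3]³` at
`u` and `-u` combine, and the class `N ≡ 0` of the right side cancels under `u ↦ -u`.
-/

namespace FarkasKra

theorem tsum_pow_three_of_summable_norm {R ι : Type*} [NormedRing R] [CompleteSpace R]
    {f : ι → R} (hf : Summable (‖f ·‖)) :
    (∑' n, f n) ^ 3 = ∑' p : ι × ι × ι, f p.1 * f p.2.1 * f p.2.2 := by
  rw [pow_three, tsum_mul_tsum_of_summable_norm hf hf,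
    tsum_mul_tsum_of_summable_norm hf (hf.mul_norm hf)]
  simp only [mul_assoc]

theorem tsum_eq_tsum_of_add_comp_involutive {ι E : Type*} [AddCommMonoid E] [TopologicalSpace E]
    [ContinuousAdd E] [T2Space E] [IsAddTorsionFree E] {σ : ι → ι}
    (hσ : Function.Involutive σ) {f g : ι → E} (hf : Summable f) (hg : Summable g)
    (h : ∀ i, f i + f (σ i) = g i + g (σ i)) :
    ∑' i, f i = ∑' i, g i := by
  set e := hσ.toPerm σ
  have hsum : ∑' i, (f i + f (e i)) = ∑' i, (g i + g (e i)) := tsum_congr h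
  rw [hf.tsum_add (g := fun i => f (e i)) (e.summable_iff.mpr hf),
    hg.tsum_add (g := fun i => g (e i)) (e.summable_iff.mpr hg), e.tsum_eq f,
    e.tsum_eq g, ← two_nsmul, ← two_nsmul] at hsum
  exact nsmul_right_injective two_ne_zero hsum

section PrimitiveTwelfthRoot

variable {K : Type*} [Field K] {ζ : K}

theorem _root_.IsPrimitiveRoot.pow_four_sub_sq_add_one (hζ : IsPrimitiveRoot ζ 12) :
    ζ ^ 4 - ζ ^ 2 + 1 = 0 := by
  have h6 : ζ ^ 6 = -1 := by
    have h := hζ.pow_ne_one_of_pos_of_lt (l := 6) (by norm_num) (by norm_num)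
    have h12 := hζ.pow_eq_one
    have : (ζ ^ 6 - 1) * (ζ ^ 6 + 1) = 0 := by linear_combination h12
    exact eq_neg_of_add_eq_zero_left
      ((mul_eq_zero.mp this).resolve_left (sub_ne_zero.mpr h))
  have h2 : ζ ^ 2 + 1 ≠ 0 := fun h => hζ.pow_ne_one_of_pos_of_lt (l := 4) (by norm_num)
    (by norm_num) (by linear_combination (ζ ^ 2 - 1) * h)
  have : (ζ ^ 2 + 1) * (ζ ^ 4 - ζ ^ 2 + 1) = 0 := by linear_combination h6
  exact (mul_eq_zero.mp this).resolve_left h2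

theorem _root_.IsPrimitiveRoot.zpow_two_mul_add_one_sq (hζ : IsPrimitiveRoot ζ 12) (N : ℤ) :
    (ζ ^ (2 * N + 1)) ^ 2 = ζ ^ (4 * (N % 3) + 2) := by
  have h12 : ζ ^ (12 : ℤ) = 1 := by exact_mod_cast hζ.pow_eq_one
  calc (ζ ^ (2 * N + 1)) ^ 2 = ζ ^ (12 * (N / 3) + (4 * (N % 3) + 2)) := by
        rw [← zpow_natCast, ← zpow_mul]; congr 1; omega
    _ = ζ ^ (4 * (N % 3) + 2) := by
        rw [zpow_add₀ (hζ.ne_zero (by norm_num)), zpow_mul, h12, one_zpow, one_mul]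

/- For `ζ = exp(2πi/12)`, `cubeDefect ζ N` and `cubeCombo ζ N` are the phases of
`θ[1/3,1/3]³ + θ[1/3,5/3]³ - θ[1/3,1]³` and of
`e^{πi/3} θ[1/3,1/3]³ + e^{2πi/3} θ[1/3,5/3]³` at the lattice points with coordinate sum `N`
(see `thetaC_pow_three`); `pairedPhase ζ N` is the phase of `θ[1,1/3]³` at such a point plus the
phase at its antipode. -/
def cubeDefect (ζ : K) (N : ℤ) : K :=
  ζ ^ (2 * N + 1) + ζ ^ (5 * (2 * N + 1)) - ζ ^ (3 * (2 * N + 1))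

def cubeCombo (ζ : K) (N : ℤ) : K :=
  ζ ^ 2 * ζ ^ (2 * N + 1) + ζ ^ 4 * ζ ^ (5 * (2 * N + 1))

def pairedPhase (ζ : K) (N : ℤ) : K :=
  ζ ^ (2 * N + 3) + ζ ^ (-(2 * N + 3))

theorem pairedPhase_neg_sub_three (ζ : K) (N : ℤ) :
    pairedPhase ζ (-3 - N) = pairedPhase ζ N := by
  rw [pairedPhase, pairedPhase, show 2 * (-3 - N) + 3 = -(2 * N + 3) by ring, neg_neg, add_comm]

variable (hζ : IsPrimitiveRoot ζ 12) {N : ℤ}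
include hζ

-- Each claim is a polynomial identity in `u = ζ ^ (2N+1)` and `ζ`, given `ζ⁴ - ζ² + 1 = 0` and
-- the value of `u²`, which depends only on `N mod 3`.

theorem cubeDefect_eq_zero (hN : N % 3 ≠ 1) : cubeDefect ζ N = 0 := by
  have hu := hζ.zpow_two_mul_add_one_sq N
  have hΦ := hζ.pow_four_sub_sq_add_one
  simp only [cubeDefect, zpow_mul', zpow_ofNat]
  obtain h | h : N % 3 = 0 ∨ N % 3 = 2 := by omega
  all_goals rw [h] at hu; norm_num at hu; grind

theorem cubeDefect_neg_sub_one (hN : N % 3 = 1) : cubeDefect ζ (-1 - N) = -cubeDefect ζ N := by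
  have hu := hζ.zpow_two_mul_add_one_sq N
  have hΦ := hζ.pow_four_sub_sq_add_one
  rw [hN] at hu; norm_num at hu
  simp only [cubeDefect, show 2 * (-1 - N) + 1 = -(2 * N + 1) by ring, zpow_mul', zpow_ofNat,
    zpow_neg]
  grind

theorem cubeCombo_neg_sub_one (hN : N % 3 = 1) : cubeCombo ζ (-1 - N) = -cubeCombo ζ N := by
  have hu := hζ.zpow_two_mul_add_one_sq N
  have hΦ := hζ.pow_four_sub_sq_add_one
  rw [hN] at hu; norm_num at hu
  simp only [cubeCombo, show 2 * (-1 - N) + 1 = -(2 * N + 1) by ring, zpow_mul', zpow_ofNat,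
    zpow_neg]
  grind

theorem cubeCombo_eq_zero (hN : N % 3 = 0) : cubeCombo ζ N = 0 := by
  have hu := hζ.zpow_two_mul_add_one_sq N
  have hΦ := hζ.pow_four_sub_sq_add_one
  rw [hN] at hu; norm_num at hu
  simp only [cubeCombo, zpow_mul', zpow_ofNat]
  grind

theorem cubeCombo_eq_pairedPhase (hN : N % 3 = 2) : cubeCombo ζ N = pairedPhase ζ (N - 1) := by
  have hu := hζ.zpow_two_mul_add_one_sq N
  have hΦ := hζ.pow_four_sub_sq_add_one
  rw [hN] at hu; norm_num at hu
  simp only [cubeCombo, pairedPhase, show 2 * (N - 1) + 3 = 2 * N + 1 by ring, zpow_mul',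
    zpow_ofNat, zpow_neg]
  grind

theorem pairedPhase_eq_zero (hN : N % 3 = 0) : pairedPhase ζ N = 0 := by
  have hu := hζ.zpow_two_mul_add_one_sq N
  have hΦ := hζ.pow_four_sub_sq_add_one
  rw [hN] at hu; norm_num at hu
  have h0 := hζ.ne_zero (by norm_num)
  rw [pairedPhase, show 2 * N + 3 = (2 * N + 1) + 2 by ring, zpow_neg, zpow_add₀ h0, zpow_ofNat]
  grind

end PrimitiveTwelfthRoot

section Lattice

def coordSum (p : ℤ × ℤ × ℤ) : ℤ := p.1 + p.2.1 + p.2.2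

def diag (k : ℤ) : ℤ × ℤ × ℤ := (k, k, k)

/- On the class `coordSum p ≡ 1 (mod 3)`, `reflect` is the reflection of `p + (1,1,1)/6` in
the plane `u₁ + u₂ + u₃ = 0`; on the class `≡ 2`, `negReflect` sends `p + (1,1,1)/6` to minus
its reflection, a point of `ℤ³ + (1,1,1)/2`. Rounding down in `reflectionIndex` makes both maps
involutions of all of `ℤ³`. -/
def reflectionIndex (p : ℤ × ℤ × ℤ) : ℤ := (2 * coordSum p + 1) / 3

def reflect (p : ℤ × ℤ × ℤ) : ℤ × ℤ × ℤ := p - diag (reflectionIndex p)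

def negReflect (p : ℤ × ℤ × ℤ) : ℤ × ℤ × ℤ := diag (reflectionIndex p) - p

def antipode (p : ℤ × ℤ × ℤ) : ℤ × ℤ × ℤ := diag (-1) - p

theorem coordSum_reflect (p : ℤ × ℤ × ℤ) :
    coordSum (reflect p) = coordSum p - 3 * ((2 * coordSum p + 1) / 3) := by
  simp only [reflect, reflectionIndex, coordSum, diag, Prod.fst_sub, Prod.snd_sub]
  ring

theorem coordSum_negReflect (p : ℤ × ℤ × ℤ) :
    coordSum (negReflect p) = 3 * ((2 * coordSum p + 1) / 3) - coordSum p := by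
  simp only [negReflect, reflectionIndex, coordSum, diag, Prod.fst_sub, Prod.snd_sub]
  ring

theorem coordSum_antipode (p : ℤ × ℤ × ℤ) : coordSum (antipode p) = -3 - coordSum p := by
  simp only [antipode, coordSum, diag, Prod.fst_sub, Prod.snd_sub]
  ring

theorem reflect_involutive : Function.Involutive reflect := by
  rintro ⟨x, y, z⟩
  simp only [reflect, reflectionIndex, coordSum, diag, Prod.mk_sub_mk, Prod.mk.injEq]
  omega

theorem negReflect_involutive : Function.Involutive negReflect := by
  rintro ⟨x, y, z⟩
  simp only [negReflect, reflectionIndex, coordSum, diag, Prod.mk_sub_mk, Prod.mk.injEq]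
  omega

theorem antipode_involutive : Function.Involutive antipode := by
  rintro ⟨x, y, z⟩
  simp only [antipode, diag, Prod.mk_sub_mk, Prod.mk.injEq]
  omega

end Lattice

section Gauss

noncomputable def gaussTerm (a τ : ℂ) (p : ℤ × ℤ × ℤ) : ℂ :=
  cexp (π * I * τ * ((p.1 + a) ^ 2 + (p.2.1 + a) ^ 2 + (p.2.2 + a) ^ 2))

variable {a τ : ℂ} {p : ℤ × ℤ × ℤ}

theorem gaussTerm_sub_diag {k : ℤ} (hk : (3 * k : ℂ) = 2 * (coordSum p + 3 * a)) :
    gaussTerm a τ (p - diag k) = gaussTerm a τ p := by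
  simp only [gaussTerm, coordSum, diag, Prod.fst_sub, Prod.snd_sub, Int.cast_sub,
    Int.cast_add] at hk ⊢
  congr 1
  linear_combination π * I * τ * k * hk

theorem gaussTerm_diag_sub {a' : ℂ} {k : ℤ}
    (hk : 3 * (k + a + a') = 2 * (coordSum p + 3 * a)) :
    gaussTerm a' τ (diag k - p) = gaussTerm a τ p := by
  simp only [gaussTerm, coordSum, diag, Prod.fst_sub, Prod.snd_sub, Int.cast_sub,
    Int.cast_add] at hk ⊢
  congr 1
  linear_combination π * I * τ * (k + a + a') * hk

theorem gaussTerm_antipode : gaussTerm a τ (antipode p) = gaussTerm (1 - a) τ p := by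
  simp only [gaussTerm, antipode, diag, Prod.fst_sub, Prod.snd_sub, Int.cast_sub]
  congr 1
  push_cast
  ring

theorem gaussTerm_reflect (hp : coordSum p % 3 = 1) :
    gaussTerm (1 / 6) τ (reflect p) = gaussTerm (1 / 6) τ p := by
  have hk : 3 * reflectionIndex p = 2 * coordSum p + 1 := by rw [reflectionIndex]; omega
  exact gaussTerm_sub_diag (by
    linear_combination (by exact_mod_cast hk : (3 * reflectionIndex p : ℂ) = 2 * coordSum p + 1))

theorem gaussTerm_negReflect (hp : coordSum p % 3 = 2) :
    gaussTerm (1 / 2) τ (negReflect p) = gaussTerm (1 / 6) τ p := by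
  have hk : 3 * reflectionIndex p = 2 * coordSum p - 1 := by rw [reflectionIndex]; omega
  exact gaussTerm_diag_sub (by
    linear_combination (by exact_mod_cast hk : (3 * reflectionIndex p : ℂ) = 2 * coordSum p - 1))

end Gauss

section Theta

noncomputable def thetaTerm (a b τ : ℂ) (n : ℤ) : ℂ :=
  cexp (2 * π * I * ((1 / 2) * (n + a) ^ 2 * τ + (n + a) * b))

variable {τ : ℂ}

theorem summable_norm_thetaTerm (a b : ℂ) (hτ : 0 < τ.im) :
    Summable (‖thetaTerm a b τ ·‖) := by
  have h : thetaTerm a b τ = fun n => jacobiTheta₂_term n (a * τ + b) τ *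
      cexp (π * I * a ^ 2 * τ + 2 * π * I * (a * b)) := by
    ext n
    rw [thetaTerm, jacobiTheta₂_term, ← Complex.exp_add]
    congr 1
    ring
  rw [summable_norm_iff, h]
  exact ((summable_jacobiTheta₂_term_iff _ τ).mpr hτ).mul_right _

theorem thetaTerm_mul_thetaTerm_mul_thetaTerm (a b τ : ℂ) (p : ℤ × ℤ × ℤ) :
    thetaTerm a b τ p.1 * thetaTerm a b τ p.2.1 * thetaTerm a b τ p.2.2 =
      gaussTerm a τ p * cexp (2 * π * I * b * (coordSum p + 3 * a)) := by
  simp only [thetaTerm, gaussTerm, coordSum, ← Complex.exp_add]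
  congr 1
  push_cast
  ring

theorem summable_norm_gaussTerm (a : ℂ) (hτ : 0 < τ.im) :
    Summable (‖gaussTerm a τ ·‖) := by
  have hf := summable_norm_thetaTerm a 0 hτ
  refine (hf.mul_norm (hf.mul_norm hf)).congr fun p => ?_
  rw [← mul_assoc, thetaTerm_mul_thetaTerm_mul_thetaTerm]
  simp

theorem summable_gaussTerm_mul_zpow {ζ : ℂ} (hζ : ‖ζ‖ = 1) (a : ℂ) (hτ : 0 < τ.im)
    (e : ℤ × ℤ × ℤ → ℤ) : Summable fun p => gaussTerm a τ p * ζ ^ e p :=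
  .of_norm_bounded (summable_norm_gaussTerm a hτ) fun p => by simp [hζ]

theorem thetaC_pow_three (k j : ℤ) (hτ : 0 < τ.im) :
    thetaC (k / 3) (j / 3) τ ^ 3 =
      ∑' p, gaussTerm (k / 6) τ p * cexp (2 * π * I / 12) ^ (j * (2 * coordSum p + k)) := by
  have hk : ((k / 3 : ℝ) : ℂ) / 2 = k / 6 := by push_cast; ring
  have hj : ((j / 3 : ℝ) : ℂ) / 2 = j / 6 := by push_cast; ring
  change (∑' n, thetaTerm _ _ τ n) ^ 3 = _
  rw [hk, hj, tsum_pow_three_of_summable_norm (summable_norm_thetaTerm _ _ hτ)]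
  refine tsum_congr fun p => ?_
  rw [thetaTerm_mul_thetaTerm_mul_thetaTerm, ← Complex.exp_int_mul]
  congr 2
  push_cast
  ring

end Theta

section GaussSums

variable {ζ τ : ℂ} (hζ : IsPrimitiveRoot ζ 12) (hτ : 0 < τ.im)
include hζ hτ

theorem tsum_gaussTerm_mul_cubeDefect :
    ∑' p, gaussTerm (1 / 6) τ p * cubeDefect ζ (coordSum p) = 0 := by
  have hs := summable_gaussTerm_mul_zpow (hζ.norm'_eq_one (by norm_num)) (1 / 6) hτ
  have hsf : Summable fun p => gaussTerm (1 / 6) τ p * cubeDefect ζ (coordSum p) :=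
    (((hs fun p => 2 * coordSum p + 1).add (hs fun p => 5 * (2 * coordSum p + 1))).sub
      (hs fun p => 3 * (2 * coordSum p + 1))).congr fun p => by rw [cubeDefect]; ring
  refine (tsum_eq_tsum_of_add_comp_involutive reflect_involutive hsf summable_zero
    fun p => ?_).trans tsum_zero
  have hN := coordSum_reflect p
  by_cases h : coordSum p % 3 = 1
  · rw [gaussTerm_reflect h, show coordSum (reflect p) = -1 - coordSum p by omega,
      cubeDefect_neg_sub_one hζ h]
    ring
  · rw [cubeDefect_eq_zero hζ h, cubeDefect_eq_zero hζ (by omega)]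
    ring

theorem tsum_gaussTerm_one_add_five_eq_three :
    ∑' p, gaussTerm (1 / 6) τ p * ζ ^ (2 * coordSum p + 1) +
        ∑' p, gaussTerm (1 / 6) τ p * ζ ^ (5 * (2 * coordSum p + 1)) =
      ∑' p, gaussTerm (1 / 6) τ p * ζ ^ (3 * (2 * coordSum p + 1)) := by
  have hs := summable_gaussTerm_mul_zpow (hζ.norm'_eq_one (by norm_num)) (1 / 6) hτ
  rw [← sub_eq_zero, ← (hs _).tsum_add (hs _), ← ((hs _).add (hs _)).tsum_sub (hs _),
    ← tsum_gaussTerm_mul_cubeDefect hζ hτ]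
  exact tsum_congr fun p => by rw [cubeDefect]; ring

theorem tsum_gaussTerm_mul_cubeCombo_eq_indicator :
    ∑' p, gaussTerm (1 / 6) τ p * cubeCombo ζ (coordSum p) =
      ∑' p, {q | coordSum q % 3 = 2}.indicator
        (fun q => gaussTerm (1 / 6) τ q * cubeCombo ζ (coordSum q)) p := by
  have hs := summable_gaussTerm_mul_zpow (hζ.norm'_eq_one (by norm_num)) (1 / 6) hτ
  have hsf : Summable fun p => gaussTerm (1 / 6) τ p * cubeCombo ζ (coordSum p) :=
    (((hs fun p => 2 * coordSum p + 1).mul_left (ζ ^ 2)).add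
      ((hs fun p => 5 * (2 * coordSum p + 1)).mul_left (ζ ^ 4))).congr fun p => by
        rw [cubeCombo]; ring
  refine tsum_eq_tsum_of_add_comp_involutive reflect_involutive hsf (hsf.indicator _) fun p => ?_
  have hN := coordSum_reflect p
  simp only [Set.indicator_apply, Set.mem_ofPred_eq]
  obtain h | h | h : coordSum p % 3 = 0 ∨ coordSum p % 3 = 1 ∨ coordSum p % 3 = 2 := by omega
  · rw [cubeCombo_eq_zero hζ h, cubeCombo_eq_zero hζ (by omega)]
    simp
  · rw [if_neg (by omega), if_neg (by omega), gaussTerm_reflect h,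
      show coordSum (reflect p) = -1 - coordSum p by omega, cubeCombo_neg_sub_one hζ h]
    ring
  · rw [if_pos h, if_pos (by omega)]

theorem tsum_gaussTerm_half_mul_zpow_eq_indicator :
    ∑' p, gaussTerm (1 / 2) τ p * ζ ^ (2 * coordSum p + 3) =
      ∑' p, {q | coordSum q % 3 = 1}.indicator
        (fun q => gaussTerm (1 / 2) τ q * pairedPhase ζ (coordSum q)) p := by
  have hs := summable_gaussTerm_mul_zpow (hζ.norm'_eq_one (by norm_num)) (1 / 2) hτ
  have hsg : Summable fun p => gaussTerm (1 / 2) τ p * pairedPhase ζ (coordSum p) :=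
    ((hs fun p => 2 * coordSum p + 3).add (hs fun p => -(2 * coordSum p + 3))).congr fun p => by
      rw [pairedPhase]; ring
  have hG (p : ℤ × ℤ × ℤ) : gaussTerm (1 / 2) τ (antipode p) = gaussTerm (1 / 2) τ p := by
    rw [gaussTerm_antipode]; norm_num
  refine tsum_eq_tsum_of_add_comp_involutive antipode_involutive (hs _) (hsg.indicator _)
    fun p => ?_
  have hN := coordSum_antipode p
  simp only [Set.indicator_apply, Set.mem_ofPred_eq, hG, hN, pairedPhase_neg_sub_three]
  have hpair : gaussTerm (1 / 2) τ p * ζ ^ (2 * coordSum p + 3) +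
      gaussTerm (1 / 2) τ p * ζ ^ (2 * (-3 - coordSum p) + 3) =
        gaussTerm (1 / 2) τ p * pairedPhase ζ (coordSum p) := by
    rw [pairedPhase, show 2 * (-3 - coordSum p) + 3 = -(2 * coordSum p + 3) by ring]
    ring
  rw [hpair]
  obtain h | h | h : coordSum p % 3 = 0 ∨ coordSum p % 3 = 1 ∨ coordSum p % 3 = 2 := by omega
  · rw [pairedPhase_eq_zero hζ h]
    simp
  · rw [if_pos h, if_neg (by omega), add_zero]
  · rw [if_neg (by omega), if_pos (by omega), zero_add]

theorem tsum_gaussTerm_combo_eq_half :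
    ζ ^ 2 * ∑' p, gaussTerm (1 / 6) τ p * ζ ^ (2 * coordSum p + 1) +
        ζ ^ 4 * ∑' p, gaussTerm (1 / 6) τ p * ζ ^ (5 * (2 * coordSum p + 1)) =
      ∑' p, gaussTerm (1 / 2) τ p * ζ ^ (2 * coordSum p + 3) := by
  have hs := summable_gaussTerm_mul_zpow (hζ.norm'_eq_one (by norm_num)) (1 / 6) hτ
  have hterm (p : ℤ × ℤ × ℤ) :
      {q | coordSum q % 3 = 2}.indicator
          (fun q => gaussTerm (1 / 6) τ q * cubeCombo ζ (coordSum q)) p =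
        {q | coordSum q % 3 = 1}.indicator
          (fun q => gaussTerm (1 / 2) τ q * pairedPhase ζ (coordSum q)) (negReflect p) := by
    have hN := coordSum_negReflect p
    simp only [Set.indicator_apply, Set.mem_ofPred_eq]
    obtain h | h | h : coordSum p % 3 = 0 ∨ coordSum p % 3 = 1 ∨ coordSum p % 3 = 2 := by omega
    · rw [if_neg (by omega), if_neg (by omega)]
    · rw [if_neg (by omega), if_neg (by omega)]
    · rw [if_pos h, if_pos (by omega), gaussTerm_negReflect h, cubeCombo_eq_pairedPhase hζ h,
        show coordSum (negReflect p) = coordSum p - 1 by omega]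
  calc ζ ^ 2 * ∑' p, gaussTerm (1 / 6) τ p * ζ ^ (2 * coordSum p + 1) +
        ζ ^ 4 * ∑' p, gaussTerm (1 / 6) τ p * ζ ^ (5 * (2 * coordSum p + 1))
      = ∑' p, gaussTerm (1 / 6) τ p * cubeCombo ζ (coordSum p) := by
        rw [← tsum_mul_left, ← tsum_mul_left,
          ← ((hs _).mul_left _).tsum_add ((hs _).mul_left _)]
        exact tsum_congr fun p => by rw [cubeCombo]; ring
    _ = ∑' p, {q | coordSum q % 3 = 1}.indicator
          (fun q => gaussTerm (1 / 2) τ q * pairedPhase ζ (coordSum q)) (negReflect p) := by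
        rw [tsum_gaussTerm_mul_cubeCombo_eq_indicator hζ hτ, tsum_congr hterm]
    _ = ∑' p, gaussTerm (1 / 2) τ p * ζ ^ (2 * coordSum p + 3) := by
        exact ((negReflect_involutive.toPerm _).tsum_eq _).trans
          (tsum_gaussTerm_half_mul_zpow_eq_indicator hζ hτ).symm

end GaussSums

end FarkasKra

theorem stmt17 :
    ∀ τ : ℂ, 0 < τ.im →
      thetaC (1 / 3) (1 / 3) τ ^ 3 + thetaC (1 / 3) (5 / 3) τ ^ 3 =
        thetaC (1 / 3) 1 τ ^ 3 ∧
      Complex.exp (Real.pi * I / 3) * thetaC (1 / 3) (1 / 3) τ ^ 3 +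
          Complex.exp (2 * Real.pi * I / 3) * thetaC (1 / 3) (5 / 3) τ ^ 3 =
        thetaC 1 (1 / 3) τ ^ 3 := by
  intro τ hτ
  have hζ : IsPrimitiveRoot (cexp (2 * π * I / 12)) 12 := by
    exact_mod_cast Complex.isPrimitiveRoot_exp 12 (by norm_num)
  have h11 := FarkasKra.thetaC_pow_three 1 1 hτ
  have h15 := FarkasKra.thetaC_pow_three 1 5 hτ
  have h13 := FarkasKra.thetaC_pow_three 1 3 hτ
  have h31 := FarkasKra.thetaC_pow_three 3 1 hτ
  simp only [Int.cast_one, Int.cast_ofNat, one_mul] at h11 h15 h13 h31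
  norm_num at h13 h31
  have hpow (n : ℕ) : cexp (2 * n * π * I / 12) = cexp (2 * π * I / 12) ^ n := by
    rw [← Complex.exp_nat_mul]; ring_nf
  refine ⟨?_, ?_⟩
  · rw [h11, h15, h13]
    exact FarkasKra.tsum_gaussTerm_one_add_five_eq_three hζ hτ
  · rw [h11, h15, h31, show π * I / 3 = 2 * (2 : ℕ) * π * I / 12 by push_cast; ring,
      show 2 * π * I / 3 = 2 * (4 : ℕ) * π * I / 12 by push_cast; ring, hpow, hpow]
    exact FarkasKra.tsum_gaussTerm_combo_eq_half hζ hτ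
end
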